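/- arXiv:2312.16919 — 2 statements merged into one kernel-verified Lean document; each statement's English description precedes it below -/
import Mathlib

section
/- Define D_0 = 1 and, for j ≥ 1, D_j = D_{j−1}^q·(t − t^{q^j})/((t − ζ^{q^{j−1}})^{q^j}·(t − ζ^q)) in 𝔽_{q²}(t). Then the formal power series exp(X) = Σ_{j≥0} D_j^{−1}·X^{q^j} over 𝔽_{q²}(t) satisfies Ψ_x(exp(X)) = exp(x·X) and Ψ_y(exp(X)) = exp(y·X) as formal power series identities, where Ψ_x(X) = T^{σ−1}X^{q²} + (T^σ + T^{(q−1)+σ})X^q + x·X and Ψ_y(X) = ζ·T^{σ−1}X^{q²} + (t·T^σ + ζ·T^{(q−1)+σ})X^q + y·X. -/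
/-!
Because `q` is a power of the characteristic, `f ↦ f ^ q` acts on coefficients by the Frobenius
and multiplies exponents by `q`. So for the series `f = ∑ D_j⁻¹ X^{q^j}` an equation
`A f^{q²} + B f^q + c f = f(c X)` holds as soon as
`A D_{j-2}^{-q²} + B D_{j-1}^{-q} + c D_j⁻¹ = c^{q^j} D_j⁻¹` for all `j ≥ 1` (with
`D_{-1}⁻¹ := 0`). The recursion reads
`D_j = D_{j-1}^q ρ(t^{q^j})` with `ρ(s) = (t - s) / ((s - ζ^q)(t - ζ^q))`, and since `π` has
coefficients in `𝔽_q` we get `x^{q^j} = π(t^{q^j})⁻¹`. Dividing by `D_j⁻¹`, the coefficient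
equation becomes one rational identity in `s = t^{q^j}`. That identity also settles `j = 1`,
because its `A`-term has the factor `t^q - s`.
-/

namespace PowerSeries

variable {R : Type*} [CommSemiring R] {p k q : ℕ} [ExpChar R p] {f : R⟦X⟧}

theorem coeff_pow_expChar_pow (n : ℕ) :
    coeff n (f ^ p ^ k) = if p ^ k ∣ n then coeff (n / p ^ k) f ^ p ^ k else 0 := by
  rw [← coeff_coe_trunc_of_lt n.lt_succ_self, ← trunc_trunc_pow,
    coeff_coe_trunc_of_lt n.lt_succ_self, ← Polynomial.coe_pow, Polynomial.coeff_coe,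
    ← Polynomial.map_iterateFrobenius_expand p, Polynomial.coeff_map,
    Polynomial.coeff_expand (expChar_pow_pos R p k)]
  split_ifs
  · rw [iterateFrobenius_def, coeff_trunc, if_pos (Nat.lt_succ_of_le (Nat.div_le_self n _))]
  · exact map_zero _

theorem coeff_pow_pow_of_eq_expChar_pow (hq : q = p ^ k) (m n : ℕ) :
    coeff n (f ^ q ^ m) = if q ^ m ∣ n then coeff (n / q ^ m) f ^ q ^ m else 0 := by
  rw [hq, ← pow_mul, coeff_pow_expChar_pow (k := k * m)]

theorem coeff_pow_add_pow_pow (hq : q = p ^ k) (j m : ℕ) :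
    coeff (q ^ (j + m)) (f ^ q ^ m) = coeff (q ^ j) f ^ q ^ m := by
  have hq0 : 0 < q := hq ▸ expChar_pow_pos R p k
  rw [coeff_pow_pow_of_eq_expChar_pow hq, if_pos (pow_dvd_pow q (Nat.le_add_left m j)),
    Nat.pow_div (Nat.le_add_left m j) hq0, Nat.add_sub_cancel]

theorem coeff_pow_pow_pow_of_lt (hq : q = p ^ k) (hq1 : 1 < q) {j m : ℕ}
    (hjm : j < m) : coeff (q ^ j) (f ^ q ^ m) = 0 := by
  rw [coeff_pow_pow_of_eq_expChar_pow hq, if_neg]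
  exact fun h => absurd (Nat.pow_dvd_pow_iff_le_right hq1 |>.1 h) (Nat.not_le.2 hjm)

theorem coeff_pow_pow_of_forall_ne (hq : q = p ^ k)
    (hf : ∀ n, (∀ j, q ^ j ≠ n) → coeff n f = 0) (m : ℕ) {n : ℕ} (hn : ∀ j, q ^ j ≠ n) :
    coeff n (f ^ q ^ m) = 0 := by
  have hq0 : 0 < q := hq ▸ expChar_pow_pos R p k
  rw [coeff_pow_pow_of_eq_expChar_pow hq]
  split_ifs with h
  · rw [hf _ fun j hj => hn (j + m) (by rw [pow_add, hj, Nat.div_mul_cancel h])]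
    exact zero_pow (pow_pos hq0 m).ne'
  · rfl

theorem C_mul_add_C_mul_add_C_mul_eq_rescale (hq : q = p ^ k) (hq1 : 1 < q)
    {e : ℕ → R} (hf : ∀ j, coeff (q ^ j) f = e j)
    (hf0 : ∀ n, (∀ j, q ^ j ≠ n) → coeff n f = 0) {A B c : R}
    (h1 : B * e 0 ^ q + c * e 1 = c ^ q * e 1)
    (h2 : ∀ j, A * e j ^ q ^ 2 + B * e (j + 1) ^ q + c * e (j + 2) = c ^ q ^ (j + 2) * e (j + 2)) :
    C A * f ^ q ^ 2 + C B * f ^ q + C c * f = rescale c f := by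
  rw [show f ^ q = f ^ q ^ 1 by rw [pow_one]]
  ext n
  simp only [map_add, coeff_C_mul, coeff_rescale]
  by_cases hn : ∃ j, q ^ j = n
  · obtain ⟨j, rfl⟩ := hn
    rcases j with _ | _ | j
    · rw [coeff_pow_pow_pow_of_lt hq hq1 two_pos, coeff_pow_pow_pow_of_lt hq hq1 one_pos]
      ring
    · rw [coeff_pow_pow_pow_of_lt hq hq1 (j := 0 + 1) one_lt_two, coeff_pow_add_pow_pow hq 0 1,
        hf, hf]
      simpa using h1
    · rw [coeff_pow_add_pow_pow hq j 2, coeff_pow_add_pow_pow hq (j + 1) 1, hf, hf, hf]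
      simpa using h2 j
  · push Not at hn
    rw [coeff_pow_pow_of_forall_ne hq hf0 2 hn, coeff_pow_pow_of_forall_ne hq hf0 1 hn,
      hf0 n hn]
    simp

end PowerSeries

section FieldIdentities

variable {K : Type*} [Field K]

theorem mul_inv_add_mul_inv_eq_of_eq_mul {B c c' d d' r : K} (hr : r ≠ 0) (hd : d' = d * r)
    (h : B * r + c = c') : B * d⁻¹ + c * d'⁻¹ = c' * d'⁻¹ := by
  subst hd h
  rw [mul_inv]
  linear_combination (-B * d⁻¹) * mul_inv_cancel₀ hr

theorem mul_inv_add_mul_inv_add_mul_inv_eq_of_eq_mul {A B c c' d₀ d₁ d₂ r₁ r₂ : K}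
    (hr₁ : r₁ ≠ 0) (hr₂ : r₂ ≠ 0) (hd₁ : d₁ = d₀ * r₁) (hd₂ : d₂ = d₁ * r₂)
    (h : A * (r₁ * r₂) + B * r₂ + c = c') :
    A * d₀⁻¹ + B * d₁⁻¹ + c * d₂⁻¹ = c' * d₂⁻¹ := by
  have hA : A * d₀⁻¹ = A * r₁ * d₁⁻¹ := by
    rw [hd₁, mul_inv]
    linear_combination (-A * d₀⁻¹) * mul_inv_cancel₀ hr₁
  rw [hA, ← add_mul]
  exact mul_inv_add_mul_inv_eq_of_eq_mul hr₂ hd₂ (by rw [← h]; ring)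

def denomRatio (t b s : K) : K := (t - s) / ((s - b) * (t - b))

theorem denomRatio_ne_zero {t b s : K} (hts : t ≠ s) (hsb : s ≠ b) (htb : t ≠ b) :
    denomRatio t b s ≠ 0 :=
  div_ne_zero (sub_ne_zero.2 hts) (mul_ne_zero (sub_ne_zero.2 hsb) (sub_ne_zero.2 htb))

variable {t a b u s w : K}

theorem psiX_denomRatio_identity (hta : t ≠ a) (htb : t ≠ b) (hsa : s ≠ a) (hsb : s ≠ b)
    (hua : u ≠ a) (hw : w * (t - b) = u - a) :
    (t - b) / (t - a) * (denomRatio u a s * denomRatio t b s) +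
        ((t - a)⁻¹ + (w * (t - a))⁻¹) * denomRatio t b s +
        ((t - a) * (t - b))⁻¹ =
      ((s - a) * (s - b))⁻¹ := by
  obtain rfl : u = w * (t - b) + a := by linear_combination -hw
  have hw₀ : w ≠ 0 := by rintro rfl; simp at hua
  rw [← sub_ne_zero] at hta htb hsa hsb hua
  unfold denomRatio
  field_simp
  ring

theorem psiY_denomRatio_identity (hta : t ≠ a) (htb : t ≠ b) (hsa : s ≠ a) (hsb : s ≠ b)
    (hua : u ≠ a) (hw : w * (t - b) = u - a) :
    a * ((t - b) / (t - a)) * (denomRatio u a s * denomRatio t b s) +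
        (t * (t - a)⁻¹ + a * (w * (t - a))⁻¹) * denomRatio t b s +
        t * ((t - a) * (t - b))⁻¹ =
      s * ((s - a) * (s - b))⁻¹ := by
  have hx := psiX_denomRatio_identity hta htb hsa hsb hua hw
  rw [← sub_ne_zero] at hta htb hsa hsb hua
  unfold denomRatio at hx ⊢
  field_simp at hx ⊢
  linear_combination a * hx

end FieldIdentities

section Frobenius

theorem pow_pow_two_mul {M : Type*} [Monoid M] {a : M} {q : ℕ} (ha : a ^ q ^ 2 = a) (j : ℕ) :
    a ^ q ^ (2 * j) = a := by
  induction j with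
  | zero => simp
  | succ j ih => rw [mul_add, mul_one, pow_add, pow_mul, ih, ha]

variable {K : Type*} [CommRing K] {p k q : ℕ} [ExpChar K p]

theorem sub_pow_of_eq_expChar_pow (hq : q = p ^ k) (x y : K) : (x - y) ^ q = x ^ q - y ^ q :=
  hq ▸ sub_pow_expChar_pow x y k

theorem sub_pow_pow_of_eq_expChar_pow (hq : q = p ^ k) (x y : K) (m : ℕ) :
    (x - y) ^ q ^ m = x ^ q ^ m - y ^ q ^ m :=
  sub_pow_of_eq_expChar_pow (k := k * m) (by rw [hq, pow_mul]) x y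

theorem sub_pow_pow_pow_succ (hq : q = p ^ k) {a : K} (ha : a ^ q ^ 2 = a) (t : K) (j : ℕ) :
    (t - a ^ q ^ j) ^ q ^ (j + 1) = t ^ q ^ (j + 1) - a ^ q := by
  rw [sub_pow_pow_of_eq_expChar_pow hq, ← pow_mul, ← pow_add,
    show j + (j + 1) = 2 * j + 1 by ring, pow_succ q (2 * j), pow_mul, pow_pow_two_mul ha]

theorem sub_mul_sub_pow_pow (hq : q = p ^ k) {a : K} (ha : a ^ q ^ 2 = a) (t : K) (j : ℕ) :
    ((t - a) * (t - a ^ q)) ^ q ^ j = (t ^ q ^ j - a) * (t ^ q ^ j - a ^ q) := by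
  induction j with
  | zero => simp
  | succ j ih =>
    rw [pow_succ, pow_mul, ih, mul_pow, sub_pow_of_eq_expChar_pow hq,
      sub_pow_of_eq_expChar_pow hq, ← pow_mul a, ← sq, ha, ← pow_mul, mul_comm]

end Frobenius

section Exponential

open PowerSeries

variable {K : Type*} [Field K] {p k q : ℕ} [ExpChar K p]

theorem denomRatio_pow (hq : q = p ^ k) (t b s : K) :
    denomRatio t b s ^ q = denomRatio (t ^ q) (b ^ q) (s ^ q) := by
  simp only [denomRatio, div_pow, mul_pow, sub_pow_of_eq_expChar_pow hq]

theorem eq_rescale_of_denomRatio_identity (hq : q = p ^ k) (hq1 : 1 < q) {t a : K}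
    (ha : a ^ q ^ 2 = a) (hta : ∀ j, t ^ q ^ j ≠ a) (htb : ∀ j, t ^ q ^ j ≠ a ^ q)
    (ht : Function.Injective fun j => t ^ q ^ j) {D : ℕ → K}
    (hD : ∀ j, D (j + 1) = D j ^ q * denomRatio t (a ^ q) (t ^ q ^ (j + 1)))
    {f : K⟦X⟧} (hf : ∀ j, coeff (q ^ j) f = (D j)⁻¹)
    (hf0 : ∀ n, (∀ j, q ^ j ≠ n) → coeff n f = 0) {A B c : K} (γ : K → K)
    (hc : ∀ j, c ^ q ^ j = γ (t ^ q ^ j))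
    (hid : ∀ s, s ≠ a → s ≠ a ^ q → A * (denomRatio (t ^ q) a s * denomRatio t (a ^ q) s) +
      B * denomRatio t (a ^ q) s + c = γ s) :
    C A * f ^ q ^ 2 + C B * f ^ q + C c * f = rescale c f := by
  have hne : ∀ {i j}, i ≠ j → t ^ q ^ i ≠ t ^ q ^ j := fun h h' => h (ht h')
  refine C_mul_add_C_mul_add_C_mul_eq_rescale hq hq1 hf hf0 ?_ fun j => ?_
  · rw [inv_pow]
    refine mul_inv_add_mul_inv_eq_of_eq_mul ?_ (by simpa using hD 0) ?_
    · exact denomRatio_ne_zero (by simpa using hne (i := 0) (j := 1) zero_ne_one)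
        (by simpa using htb 1) (by simpa using htb 0)
    · have h := hid (t ^ q) (by simpa using hta 1) (by simpa using htb 1)
      rw [denomRatio, sub_self, zero_div, zero_mul, mul_zero, zero_add] at h
      rw [h, ← pow_one q, hc 1]
  · rw [inv_pow, inv_pow]
    set s := t ^ q ^ (j + 2)
    refine mul_inv_add_mul_inv_add_mul_inv_eq_of_eq_mul (r₁ := denomRatio (t ^ q) a s)
      (r₂ := denomRatio t (a ^ q) s) ?_ ?_ ?_ (hD (j + 1)) ?_
    · exact denomRatio_ne_zero (by simpa using hne (i := 1) (j := j + 2) (by omega))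
        (hta _) (by simpa using hta 1)
    · exact denomRatio_ne_zero (by simpa using hne (i := 0) (j := j + 2) (by omega))
        (htb _) (by simpa using htb 0)
    · rw [hD j, mul_pow, ← pow_mul, ← sq, denomRatio_pow hq, ← pow_mul a, ← sq, ha, ← pow_mul,
        ← pow_succ]
    · rw [hid s (hta _) (htb _), hc]

theorem psi_eq_rescale (hq : q = p ^ k) (hq1 : 1 < q) {t a : K} (ha : a ^ q ^ 2 = a)
    (hta : ∀ j, t ^ q ^ j ≠ a) (htb : ∀ j, t ^ q ^ j ≠ a ^ q)
    (ht : Function.Injective fun j => t ^ q ^ j) {D : ℕ → K}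
    (hD : ∀ j, D (j + 1) = D j ^ q * denomRatio t (a ^ q) (t ^ q ^ (j + 1)))
    {f : K⟦X⟧} (hf : ∀ j, coeff (q ^ j) f = (D j)⁻¹)
    (hf0 : ∀ n, (∀ j, q ^ j ≠ n) → coeff n f = 0) :
    C ((t - a ^ q) / (t - a)) * f ^ q ^ 2 +
        C ((t - a)⁻¹ + ((t - a ^ q) ^ (q - 1) * (t - a))⁻¹) * f ^ q +
        C ((t - a) * (t - a ^ q))⁻¹ * f = rescale ((t - a) * (t - a ^ q))⁻¹ f ∧
      C (a * ((t - a ^ q) / (t - a))) * f ^ q ^ 2 +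
        C (t * (t - a)⁻¹ + a * ((t - a ^ q) ^ (q - 1) * (t - a))⁻¹) * f ^ q +
        C (t * ((t - a) * (t - a ^ q))⁻¹) * f = rescale (t * ((t - a) * (t - a ^ q))⁻¹) f := by
  have hw : (t - a ^ q) ^ (q - 1) * (t - a ^ q) = t ^ q - a := by
    rw [← pow_succ, Nat.sub_add_cancel hq1.le, sub_pow_of_eq_expChar_pow hq, ← pow_mul, ← sq, ha]
  have hx : ∀ j, ((t - a) * (t - a ^ q))⁻¹ ^ q ^ j = ((t ^ q ^ j - a) * (t ^ q ^ j - a ^ q))⁻¹ :=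
    fun j => by rw [inv_pow, sub_mul_sub_pow_pow hq ha]
  have hta₀ : t ≠ a := by simpa using hta 0
  have htb₀ : t ≠ a ^ q := by simpa using htb 0
  have hua : t ^ q ≠ a := by simpa using hta 1
  exact ⟨eq_rescale_of_denomRatio_identity hq hq1 ha hta htb ht hD hf hf0 _ hx
      fun s hsa hsb => psiX_denomRatio_identity hta₀ htb₀ hsa hsb hua hw,
    eq_rescale_of_denomRatio_identity hq hq1 ha hta htb ht hD hf hf0
      (fun s => s * ((s - a) * (s - a ^ q))⁻¹) (fun j => by rw [mul_pow, hx])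
      fun s hsa hsb => psiY_denomRatio_identity hta₀ htb₀ hsa hsb hua hw⟩

end Exponential

theorem FiniteField.exists_eq_ringChar_pow_of_dvd_card {F : Type*} [Field F] [Fintype F] {q : ℕ}
    (hq : q ∣ Fintype.card F) : ∃ k, q = ringChar F ^ k := by
  obtain ⟨n, hp, hcard⟩ := FiniteField.card F (ringChar F)
  obtain ⟨k, -, hk⟩ := (Nat.dvd_prime_pow hp).1 (hcard ▸ hq)
  exact ⟨k, hk⟩

namespace RatFunc

variable {F : Type*} [Field F]

theorem X_pow_injective : Function.Injective fun n : ℕ => (X : RatFunc F) ^ n := by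
  intro m n h
  have h' : (Polynomial.X : Polynomial F) ^ m = Polynomial.X ^ n :=
    algebraMap_injective F (by simpa using h)
  simpa using congrArg Polynomial.natDegree h'

theorem X_pow_ne_C {m : ℕ} (hm : 0 < m) (c : F) : (X : RatFunc F) ^ m ≠ C c := by
  intro h
  apply Polynomial.X_pow_sub_C_ne_zero hm c
  apply algebraMap_injective F
  simp [h]

end RatFunc

theorem stmt8_general {F : Type*} [Field F] [Fintype F]
    (q : ℕ) (hq : Fintype.card F = q ^ 2) (ζ : F) (hζ : ζ ^ q ≠ ζ)
    (Df : ℕ → RatFunc F)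
    (hD : ∀ j : ℕ, Df (j + 1) = Df j ^ q * (RatFunc.X - RatFunc.X ^ q ^ (j + 1)) /
      ((RatFunc.X - RatFunc.C (ζ ^ q ^ j)) ^ q ^ (j + 1) * (RatFunc.X - RatFunc.C ζ ^ q)))
    (f : PowerSeries (RatFunc F))
    (hf1 : ∀ j : ℕ, PowerSeries.coeff (q ^ j) f = (Df j)⁻¹)
    (hf2 : ∀ n : ℕ, (∀ j : ℕ, q ^ j ≠ n) → PowerSeries.coeff n f = 0) :
    let t : RatFunc F := RatFunc.X
    let z : RatFunc F := RatFunc.C ζ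
    let x : RatFunc F := ((t - z) * (t - z ^ q))⁻¹
    let y : RatFunc F := t * x
    PowerSeries.C ((t - z ^ q) / (t - z)) * f ^ q ^ 2 +
        PowerSeries.C ((t - z)⁻¹ + ((t - z ^ q) ^ (q - 1) * (t - z))⁻¹) * f ^ q +
        PowerSeries.C x * f = PowerSeries.rescale x f ∧
      PowerSeries.C (z * ((t - z ^ q) / (t - z))) * f ^ q ^ 2 +
        PowerSeries.C (t * (t - z)⁻¹ + z * ((t - z ^ q) ^ (q - 1) * (t - z))⁻¹) *
          f ^ q +
        PowerSeries.C y * f = PowerSeries.rescale y f := by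
  intro t z x y
  have hq1 : 1 < q := by
    by_contra! h
    interval_cases q
    · simp at hq
    · exact hζ (pow_one ζ)
  obtain ⟨k, hqk⟩ :=
    FiniteField.exists_eq_ringChar_pow_of_dvd_card (hq ▸ dvd_pow_self q two_ne_zero)
  have : ExpChar F (ringChar F) := ExpChar.prime (CharP.char_is_prime F _)
  have ha : z ^ q ^ 2 = z := by rw [← map_pow, ← hq, FiniteField.pow_card]
  have hqj : ∀ j, 0 < q ^ j := fun j => pow_pos (by omega) j
  refine psi_eq_rescale hqk hq1 ha (fun j => RatFunc.X_pow_ne_C (hqj j) ζ)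
    (fun j => by rw [← map_pow]; exact RatFunc.X_pow_ne_C (hqj j) _)
    (RatFunc.X_pow_injective.comp (Nat.pow_right_injective hq1)) (fun j => ?_) hf1 hf2
  rw [hD j, map_pow, sub_pow_pow_pow_succ hqk ha, mul_div_assoc, denomRatio]

/-- Proposition 3.7 (exponential part): the power series
`exp(X) = Σ_j D_j⁻¹ X^{q^j}` satisfies `Ψ_x(exp(X)) = exp(xX)` and
`Ψ_y(exp(X)) = exp(yX)`. -/
theorem stmt8 {F : Type*} [Field F] [Fintype F]
    (q : ℕ) (hq : Fintype.card F = q ^ 2) (ζ : F) (hζ : ζ ^ q ≠ ζ)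
    (Df : ℕ → RatFunc F) (hD0 : Df 0 = 1)
    (hD : ∀ j : ℕ, Df (j + 1) = Df j ^ q * (RatFunc.X - RatFunc.X ^ q ^ (j + 1)) /
      ((RatFunc.X - RatFunc.C (ζ ^ q ^ j)) ^ q ^ (j + 1) * (RatFunc.X - RatFunc.C ζ ^ q)))
    (f : PowerSeries (RatFunc F))
    (hf1 : ∀ j : ℕ, PowerSeries.coeff (q ^ j) f = (Df j)⁻¹)
    (hf2 : ∀ n : ℕ, (∀ j : ℕ, q ^ j ≠ n) → PowerSeries.coeff n f = 0) :
    let t : RatFunc F := RatFunc.X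
    let z : RatFunc F := RatFunc.C ζ
    let x : RatFunc F := ((t - z) * (t - z ^ q))⁻¹
    let y : RatFunc F := t * x
    PowerSeries.C ((t - z ^ q) / (t - z)) * f ^ q ^ 2 +
        PowerSeries.C ((t - z)⁻¹ + ((t - z ^ q) ^ (q - 1) * (t - z))⁻¹) * f ^ q +
        PowerSeries.C x * f = PowerSeries.rescale x f ∧
      PowerSeries.C (z * ((t - z ^ q) / (t - z))) * f ^ q ^ 2 +
        PowerSeries.C (t * (t - z)⁻¹ + z * ((t - z ^ q) ^ (q - 1) * (t - z))⁻¹) *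
          f ^ q +
        PowerSeries.C y * f = PowerSeries.rescale y f :=
  stmt8_general q hq ζ hζ Df hD f hf1 hf2
end

section
/- Define L_0 = 1 and, for j ≥ 1, L_j = L_{j−1}·(t − t^{q^j})/((t − ζ^{q^{j+1}})·(t − ζ)^{q^j − q^{j−1}}·(t − ζ^q)^{q^{j−1}}) in 𝔽_{q²}(t). Then the formal power series log(X) = Σ_{j≥0} (−1)^j·L_j^{−1}·X^{q^j} over 𝔽_{q²}(t) satisfies log(Ψ_x(X)) = x·log(X) and log(Ψ_y(X)) = y·log(X) as formal power series identities, where Ψ_x(X) = T^{σ−1}X^{q²} + (T^σ + T^{(q−1)+σ})X^q + x·X and Ψ_y(X) = ζ·T^{σ−1}X^{q²} + (t·T^σ + ζ·T^{(q−1)+σ})X^q + y·X. -/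
/-!
The polynomials `Ψ_x` and `Ψ_y` are `𝔽_q`-linear, so `Ψ(X)^{q^j}` is `Ψ` with its coefficients
raised to the `q^j`-th power and `X^{q^i}` replaced by `X^{q^{i+j}}`. Hence the coefficient of
`X^{q^k}` in `log(Ψ(X))` only involves `L_{k-2}, L_{k-1}, L_k`, and the theorem reduces to a
three-term identity for every `k`. Both `Ψ_x` and `Ψ_y` are treated at once as `Ψ_{a+bt}`.

The `q^j`-th power map is a ring endomorphism of `𝔽_{q²}(t)` that sends `t ↦ t^{q^j}` and
`ζ ↦ ζ^{q^j}`, with `ζ^{q^{j+2}} = ζ^{q^j}`. Writing `L_{j+1}/L_j` and the coefficients of `Ψ` as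
rational functions of `t`, `t^{q^j}` and `ζ^{q^j}`, the three-term identity becomes one identity
between rational functions in independent quantities, and it is checked by clearing denominators.
-/

open Polynomial

section Trinomial

variable {R : Type*} [CommSemiring R]

noncomputable def qTrinomial (q : ℕ) (A B c : R) : R[X] := C A * X ^ q ^ 2 + C B * X ^ q + C c * X

theorem coeff_qTrinomial_pow (p : ℕ) [ExpChar R p] {q i : ℕ} (hq : q = p ^ i) (A B c : R)
    (j n : ℕ) :
    (qTrinomial q A B c ^ q ^ j).coeff n =
      (if n = q ^ (j + 2) then A ^ q ^ j else 0) + (if n = q ^ (j + 1) then B ^ q ^ j else 0) +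
        (if n = q ^ j then c ^ q ^ j else 0) := by
  have frob (P Q : R[X]) : (P + Q) ^ q ^ j = P ^ q ^ j + Q ^ q ^ j := by
    rw [hq, ← pow_mul]; exact add_pow_expChar_pow ..
  rw [qTrinomial, frob, frob]
  simp only [mul_pow, ← C_pow, ← pow_mul, ← pow_succ', ← pow_add, add_comm 2,
    coeff_add, coeff_C_mul_X_pow]

end Trinomial

theorem sum_coeff_qTrinomial_pow {K : Type*} [Field K] (p : ℕ) [ExpChar K p] {q i : ℕ}
    (hq : q = p ^ i) (hq1 : 1 < q) (A B c : K) (L : ℕ → K) (g : PowerSeries K)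
    (hg : ∀ j, PowerSeries.coeff (q ^ j) g = (-1) ^ j * (L j)⁻¹)
    (hg' : ∀ n, (∀ j, q ^ j ≠ n) → PowerSeries.coeff n g = 0)
    (h1 : (L 0)⁻¹ * B - (L 1)⁻¹ * c ^ q = -(c * (L 1)⁻¹))
    (h2 : ∀ m, (L m)⁻¹ * A ^ q ^ m - (L (m + 1))⁻¹ * B ^ q ^ (m + 1) +
      (L (m + 2))⁻¹ * c ^ q ^ (m + 2) = c * (L (m + 2))⁻¹) (n : ℕ) :
    ∑ j ∈ Finset.range (n + 1), (-1) ^ j * (L j)⁻¹ * (qTrinomial q A B c ^ q ^ j).coeff n =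
      c * PowerSeries.coeff n g := by
  simp only [coeff_qTrinomial_pow p hq]
  by_cases hn : ∃ k, q ^ k = n
  · obtain ⟨k, rfl⟩ := hn
    have hk : k < q ^ k + 1 := (Nat.lt_pow_self hq1).trans (Nat.lt_succ_self _)
    rw [hg k]
    simp only [Nat.pow_right_inj hq1, mul_add, mul_ite, mul_zero, Finset.sum_add_distrib]
    rcases k with _ | _ | m
    · simp [mul_comm]
    · simp [show 0 < q by omega]
      linear_combination h1
    · have hm : m + 1 < q ^ (m + 1 + 1) := by omega
      simp [hm, hm.le, show m ≤ q ^ (m + 1 + 1) by omega]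
      linear_combination (-1) ^ m * h2 m
  · have hn' (k : ℕ) : n ≠ q ^ k := fun h => hn ⟨k, h.symm⟩
    simp [hg' n fun k h => hn ⟨k, h⟩, hn']

section LogRatio

variable {K : Type*} [Field K]

/-- `L_{j+1} / L_j`, evaluated at `u = t^{q^j}`, `v = t^{q^{j+1}}`, `e = ζ^{q^j}`,
`e' = ζ^{q^{j+1}}`. -/
def logRatio (t e e' u v : K) : K := (t - v) * (u - e) / ((t - e) * (v - e') * (u - e'))

/- At `u = t`, `v = t^q`, `e = ζ`, `e' = ζ^q`, `psiA`, `psiB` and `psiC` are the coefficients of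
`X^{q²}`, `X^q` and `X` in `Ψ_{a+bt} = a Ψ_x + b Ψ_y`; the factor `(t - ζ^q)^{q-1}` of the
paper is written as `(t^q - ζ) / (t - ζ^q)`. -/
def psiA (a b u e e' : K) : K := (a + b * e) * ((u - e') / (u - e))

def psiB (a b u v e e' : K) : K :=
  (a + b * u) * (u - e)⁻¹ + (a + b * e) * ((u - e') / ((v - e) * (u - e)))

def psiC (a b u e e' : K) : K := (a + b * u) * ((u - e) * (u - e'))⁻¹

theorem map_psiA {L : Type*} [Field L] (f : K →+* L) (a b u e e' : K) :
    f (psiA a b u e e') = psiA (f a) (f b) (f u) (f e) (f e') := by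
  simp [psiA]

theorem map_psiB {L : Type*} [Field L] (f : K →+* L) (a b u v e e' : K) :
    f (psiB a b u v e e') = psiB (f a) (f b) (f u) (f v) (f e) (f e') := by
  simp [psiB]

theorem map_psiC {L : Type*} [Field L] (f : K →+* L) (a b u e e' : K) :
    f (psiC a b u e e') = psiC (f a) (f b) (f u) (f e) (f e') := by
  simp [psiC]

theorem psiC_comm (a b u e e' : K) : psiC a b u e e' = psiC a b u e' e := by
  rw [psiC, psiC, mul_comm (u - e)]

variable {u e L : ℕ → K}

theorem psiC_periodic (he : ∀ j, e (j + 2) = e j) (a b w : K) (m : ℕ) :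
    psiC a b w (e m) (e (m + 1)) = psiC a b w (e 0) (e 1) := by
  induction m with
  | zero => rfl
  | succ m ih => rw [he, psiC_comm, ih]

theorem ne_zero_of_logRatio_recurrence (hue : ∀ j k, u j - e k ≠ 0)
    (huu : ∀ j, u 0 - u (j + 1) ≠ 0) (hL0 : L 0 ≠ 0)
    (hL : ∀ j, L (j + 1) = L j * logRatio (u 0) (e j) (e (j + 1)) (u j) (u (j + 1))) (j : ℕ) :
    L j ≠ 0 := by
  induction j with
  | zero => exact hL0
  | succ j ih =>
    have := hue 0 j; have := hue (j + 1) (j + 1); have := hue j j; have := hue j (j + 1)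
    have := huu j
    rw [hL, logRatio]
    positivity

theorem logRatio_recurrence_identity_one (a b : K) (hue : ∀ j k, u j - e k ≠ 0)
    (huu : ∀ j, u 0 - u (j + 1) ≠ 0) (hL0 : L 0 ≠ 0)
    (hL : ∀ j, L (j + 1) = L j * logRatio (u 0) (e j) (e (j + 1)) (u j) (u (j + 1))) :
    (L 0)⁻¹ * psiB a b (u 0) (u 1) (e 0) (e 1) - (L 1)⁻¹ * psiC a b (u 1) (e 1) (e 0) =
      -(psiC a b (u 0) (e 0) (e 1) * (L 1)⁻¹) := by
  have := hue 0 1; have := hue 1 0; have := hue 1 1; have := huu 0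
  rw [hL 0]
  simp only [psiB, psiC, logRatio]
  field_simp
  ring

theorem logRatio_recurrence_identity_add_two (a b : K) (he : ∀ j, e (j + 2) = e j)
    (hue : ∀ j k, u j - e k ≠ 0) (huu : ∀ j, u 0 - u (j + 1) ≠ 0) (hL0 : L 0 ≠ 0)
    (hL : ∀ j, L (j + 1) = L j * logRatio (u 0) (e j) (e (j + 1)) (u j) (u (j + 1))) (m : ℕ) :
    (L m)⁻¹ * psiA a b (u m) (e m) (e (m + 1)) -
        (L (m + 1))⁻¹ * psiB a b (u (m + 1)) (u (m + 2)) (e (m + 1)) (e m) +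
        (L (m + 2))⁻¹ * psiC a b (u (m + 2)) (e m) (e (m + 1)) =
      psiC a b (u 0) (e 0) (e 1) * (L (m + 2))⁻¹ := by
  have := ne_zero_of_logRatio_recurrence hue huu hL0 hL m
  have := hue 0 m; have := hue 0 (m + 1); have := hue m (m + 1); have := hue (m + 1) (m + 1)
  have := hue (m + 2) m; have := hue (m + 2) (m + 1); have := huu m; have := huu (m + 1)
  rw [← psiC_periodic he a b (u 0) m, hL (m + 1), hL m, he]
  simp only [psiA, psiB, psiC, logRatio]
  field_simp
  ring

end LogRatio

theorem pow_pow_add_two {M : Type*} [Monoid M] {q : ℕ} {ζ : M} (hζ : ζ ^ q ^ 2 = ζ) (j : ℕ) :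
    ζ ^ q ^ (j + 2) = ζ ^ q ^ j := by
  rw [pow_add, mul_comm, pow_mul, hζ]

theorem FiniteField.exists_eq_pow_of_card_eq_sq {F : Type*} [Field F] [Fintype F] {q : ℕ}
    (hq : Fintype.card F = q ^ 2) : ∃ p i : ℕ, ExpChar F p ∧ q = p ^ i := by
  obtain ⟨p, _, n, hp, hcard⟩ := FiniteField.card' F
  obtain ⟨i, -, hqp⟩ := (Nat.dvd_prime_pow hp).mp ⟨q, by rw [← hcard, hq, sq]⟩
  exact ⟨p, i, ExpChar.prime hp, hqp⟩

namespace RatFunc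

variable {F : Type*} [Field F]

theorem X_pow_sub_C_ne_zero {n : ℕ} (hn : 0 < n) (a : F) : (X : RatFunc F) ^ n - C a ≠ 0 := by
  rw [← algebraMap_X, ← algebraMap_C, ← map_pow, ← map_sub]
  exact algebraMap_ne_zero (Polynomial.X_pow_sub_C_ne_zero hn a)

theorem X_sub_X_pow_ne_zero {n : ℕ} (hn : 1 < n) : (X : RatFunc F) - X ^ n ≠ 0 := by
  rw [← neg_ne_zero, neg_sub, ← algebraMap_X, ← map_pow, ← map_sub]
  exact algebraMap_ne_zero (FiniteField.X_pow_card_sub_X_ne_zero F hn)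

variable {p : ℕ} [ExpChar F p] {q i : ℕ}

theorem X_sub_C_pow_pow (hqp : q = p ^ i) (a : F) (k : ℕ) :
    (X - C a : RatFunc F) ^ q ^ k = X ^ q ^ k - C (a ^ q ^ k) := by
  rw [hqp, ← pow_mul, sub_pow_expChar_pow, map_pow]

theorem X_sub_C_pow_pred (hqp : q = p ^ i) {ζ : F} (hζ : ζ ^ q ^ 2 = ζ) :
    (X - C (ζ ^ q) : RatFunc F) ^ (q - 1) = (X ^ q - C ζ) / (X - C (ζ ^ q)) := by
  have hq : 0 < q := hqp ▸ pow_pos (expChar_pos F p) i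
  have h := X_sub_C_pow_pow hqp (ζ ^ q) 1
  rw [pow_one, ← pow_mul, ← sq, hζ] at h
  rw [pow_sub₀ _ (by simpa using X_pow_sub_C_ne_zero one_pos (ζ ^ q)) hq, pow_one, h,
    div_eq_mul_inv]

theorem X_sub_X_pow_div_eq_logRatio (hqp : q = p ^ i) {ζ : F} (hζ : ζ ^ q ^ 2 = ζ) (j : ℕ) :
    (X - X ^ q ^ (j + 1)) / ((X - C (ζ ^ q ^ (j + 2))) * (X - C ζ) ^ (q ^ (j + 1) - q ^ j) *
      (X - C ζ ^ q) ^ q ^ j) =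
    logRatio X (C (ζ ^ q ^ j)) (C (ζ ^ q ^ (j + 1))) (X ^ q ^ j) (X ^ q ^ (j + 1)) := by
  have hq : 0 < q := hqp ▸ pow_pos (expChar_pos F p) i
  have hle : q ^ j ≤ q ^ (j + 1) := Nat.pow_le_pow_right hq j.le_succ
  have hne (n : ℕ) (a : F) : (X : RatFunc F) ^ q ^ n - C a ≠ 0 :=
    X_pow_sub_C_ne_zero (pow_pos hq n) a
  have hX : (X : RatFunc F) - C ζ ≠ 0 := by simpa using hne 0 ζ
  rw [pow_pow_add_two hζ, ← map_pow, pow_sub₀ _ hX hle, X_sub_C_pow_pow hqp, X_sub_C_pow_pow hqp,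
    X_sub_C_pow_pow hqp, ← pow_mul, ← pow_succ', logRatio]
  have := hne j j
  field_simp

/- `a` and `b` are natural numbers so that every ring endomorphism fixes them. -/
theorem sum_coeff_qTrinomial_psi_pow (hqp : q = p ^ i) (hq1 : 1 < q) {ζ : F}
    (hζ : ζ ^ q ^ 2 = ζ) {L : ℕ → RatFunc F} (hL0 : L 0 ≠ 0)
    (hL : ∀ j, L (j + 1) =
      L j * logRatio X (C (ζ ^ q ^ j)) (C (ζ ^ q ^ (j + 1))) (X ^ q ^ j) (X ^ q ^ (j + 1)))
    {g : PowerSeries (RatFunc F)} (hg : ∀ j, PowerSeries.coeff (q ^ j) g = (-1) ^ j * (L j)⁻¹)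
    (hg' : ∀ n, (∀ j, q ^ j ≠ n) → PowerSeries.coeff n g = 0) (a b n : ℕ) :
    ∑ j ∈ Finset.range (n + 1), (-1) ^ j * (L j)⁻¹ *
        (qTrinomial q (psiA (a : RatFunc F) b X (C ζ) (C ζ ^ q))
          (psiB (a : RatFunc F) b X (X ^ q) (C ζ) (C ζ ^ q))
          (psiC (a : RatFunc F) b X (C ζ) (C ζ ^ q)) ^ q ^ j).coeff n =
      psiC (a : RatFunc F) b X (C ζ) (C ζ ^ q) * PowerSeries.coeff n g := by
  let φ (k : ℕ) : RatFunc F →+* RatFunc F := iterateFrobenius (RatFunc F) p (i * k)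
  have hφ (k : ℕ) (w : RatFunc F) : φ k w = w ^ q ^ k := by
    rw [iterateFrobenius_def, hqp, pow_mul]
  let u (j : ℕ) : RatFunc F := X ^ q ^ j
  let e (j : ℕ) : RatFunc F := C (ζ ^ q ^ j)
  have hφu (m k : ℕ) : φ m (u k) = u (m + k) := by
    rw [hφ, ← pow_mul, ← pow_add, add_comm]
  have hφe (m k : ℕ) : φ m (e k) = e (m + k) := by
    rw [hφ, ← map_pow, ← pow_mul, ← pow_add, add_comm]
  have he (j : ℕ) : e (j + 2) = e j := by simp only [e, pow_pow_add_two hζ]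
  have hue (j k : ℕ) : u j - e k ≠ 0 := X_pow_sub_C_ne_zero (pow_pos (by omega) j) _
  have huu (j : ℕ) : u 0 - u (j + 1) ≠ 0 := by
    simpa [u] using X_sub_X_pow_ne_zero (Nat.one_lt_pow j.succ_ne_zero hq1)
  have hrec (j : ℕ) : L (j + 1) = L j * logRatio (u 0) (e j) (e (j + 1)) (u j) (u (j + 1)) := by
    simpa only [u, pow_zero, pow_one] using hL j
  obtain ⟨hu0, hu1, he0, he1⟩ : X = u 0 ∧ X ^ q = u 1 ∧ C ζ = e 0 ∧ C ζ ^ q = e 1 := by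
    simp [u, e]
  rw [he1, hu1, hu0, he0]
  refine sum_coeff_qTrinomial_pow p hqp hq1 _ _ _ L g hg hg' ?_ (fun m => ?_) n
  · rw [show ∀ w, w ^ q = φ 1 w from fun w => by rw [hφ, pow_one], map_psiC, map_natCast,
      map_natCast, hφu, hφe, hφe]
    simpa [he 0] using logRatio_recurrence_identity_one (a : RatFunc F) b hue huu hL0 hrec
  · simp only [← hφ, map_psiA, map_psiB, map_psiC, map_natCast, hφu, hφe]
    simpa [he] using logRatio_recurrence_identity_add_two (a : RatFunc F) b he hue huu hL0 hrec m

end RatFunc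

theorem stmt9_general {F : Type*} [Field F] [Fintype F]
    (q : ℕ) (hq : Fintype.card F = q ^ 2) (ζ : F)
    (Lf : ℕ → RatFunc F) (hL0 : Lf 0 = 1)
    (hL : ∀ j : ℕ, Lf (j + 1) = Lf j * (RatFunc.X - RatFunc.X ^ q ^ (j + 1)) /
      ((RatFunc.X - RatFunc.C (ζ ^ q ^ (j + 2))) *
        (RatFunc.X - RatFunc.C ζ) ^ (q ^ (j + 1) - q ^ j) *
        (RatFunc.X - RatFunc.C ζ ^ q) ^ q ^ j))
    (g : PowerSeries (RatFunc F))
    (hg1 : ∀ j : ℕ, PowerSeries.coeff (R := RatFunc F) (q ^ j) g = (-1 : RatFunc F) ^ j * (Lf j)⁻¹)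
    (hg2 : ∀ n : ℕ, (∀ j : ℕ, q ^ j ≠ n) → PowerSeries.coeff (R := RatFunc F) n g = 0) :
    let t : RatFunc F := RatFunc.X
    let z : RatFunc F := RatFunc.C ζ
    let x : RatFunc F := ((t - z) * (t - z ^ q))⁻¹
    let y : RatFunc F := t * x
    let Ψx : Polynomial (RatFunc F) :=
      Polynomial.C ((t - z ^ q) / (t - z)) * Polynomial.X ^ q ^ 2 +
        Polynomial.C ((t - z)⁻¹ + ((t - z ^ q) ^ (q - 1) * (t - z))⁻¹) * Polynomial.X ^ q +
        Polynomial.C x * Polynomial.X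
    let Ψy : Polynomial (RatFunc F) :=
      Polynomial.C (z * ((t - z ^ q) / (t - z))) * Polynomial.X ^ q ^ 2 +
        Polynomial.C (t * (t - z)⁻¹ + z * ((t - z ^ q) ^ (q - 1) * (t - z))⁻¹) *
          Polynomial.X ^ q +
        Polynomial.C y * Polynomial.X
    (∀ n : ℕ, ∑ j ∈ Finset.range (n + 1),
        (-1 : RatFunc F) ^ j * (Lf j)⁻¹ * (Ψx ^ q ^ j).coeff n =
        x * PowerSeries.coeff (R := RatFunc F) n g) ∧
      (∀ n : ℕ, ∑ j ∈ Finset.range (n + 1),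
        (-1 : RatFunc F) ^ j * (Lf j)⁻¹ * (Ψy ^ q ^ j).coeff n =
        y * PowerSeries.coeff (R := RatFunc F) n g) := by
  intro t z x y Ψx Ψy
  obtain ⟨p, i, _, hqp⟩ := FiniteField.exists_eq_pow_of_card_eq_sq hq
  have hq1 : 1 < q := (Nat.one_lt_pow_iff two_ne_zero).mp (hq ▸ Fintype.one_lt_card)
  have hζ : ζ ^ q ^ 2 = ζ := hq ▸ FiniteField.pow_card ζ
  have key := RatFunc.sum_coeff_qTrinomial_psi_pow hqp hq1 hζ (L := Lf) (hL0 ▸ one_ne_zero)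
    (fun j => by rw [hL, mul_div_assoc, RatFunc.X_sub_X_pow_div_eq_logRatio hqp hζ]) hg1 hg2
  have hB : ((t - z ^ q) ^ (q - 1) * (t - z))⁻¹ = (t - z ^ q) / ((t ^ q - z) * (t - z)) := by
    rw [← map_pow, RatFunc.X_sub_C_pow_pred hqp hζ, div_mul_eq_mul_div, inv_div]
  have hΨx : Ψx = qTrinomial q (psiA ((1 : ℕ) : RatFunc F) (0 : ℕ) t z (z ^ q))
      (psiB ((1 : ℕ) : RatFunc F) (0 : ℕ) t (t ^ q) z (z ^ q))
      (psiC ((1 : ℕ) : RatFunc F) (0 : ℕ) t z (z ^ q)) := by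
    simp only [Ψx, qTrinomial, psiA, psiB, psiC, hB, Nat.cast_one, Nat.cast_zero, zero_mul,
      add_zero, one_mul, x]
  have hΨy : Ψy = qTrinomial q (psiA ((0 : ℕ) : RatFunc F) (1 : ℕ) t z (z ^ q))
      (psiB ((0 : ℕ) : RatFunc F) (1 : ℕ) t (t ^ q) z (z ^ q))
      (psiC ((0 : ℕ) : RatFunc F) (1 : ℕ) t z (z ^ q)) := by
    simp only [Ψy, qTrinomial, psiA, psiB, psiC, hB, Nat.cast_one, Nat.cast_zero, zero_add,
      one_mul, y, x]
  have hx : x = psiC ((1 : ℕ) : RatFunc F) (0 : ℕ) t z (z ^ q) := by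
    simp only [x, psiC, Nat.cast_one, Nat.cast_zero, zero_mul, add_zero, one_mul]
  have hy : y = psiC ((0 : ℕ) : RatFunc F) (1 : ℕ) t z (z ^ q) := by
    simp only [y, x, psiC, Nat.cast_one, Nat.cast_zero, zero_add, one_mul]
  exact ⟨fun n => hΨx ▸ hx ▸ key 1 0 n, fun n => hΨy ▸ hy ▸ key 0 1 n⟩

/-- Proposition 3.7 (logarithm part): the power series
`log(X) = Σ_j (−1)^j L_j⁻¹ X^{q^j}` satisfies `log(Ψ_x(X)) = x·log(X)` and
`log(Ψ_y(X)) = y·log(X)`.  The composition `log ∘ Ψ` is expressed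
coefficientwise: the coefficient of `X^n` in `Σ_j (−1)^j L_j⁻¹ (Ψ(X))^{q^j}` is
`Σ_{j ≤ n} (−1)^j L_j⁻¹ · coeff_n (Ψ^{q^j})` (terms with `q^j > n` vanish). -/
theorem stmt9 {F : Type*} [Field F] [Fintype F]
    (q : ℕ) (hq : Fintype.card F = q ^ 2) (ζ : F) (hζ : ζ ^ q ≠ ζ)
    (Lf : ℕ → RatFunc F) (hL0 : Lf 0 = 1)
    (hL : ∀ j : ℕ, Lf (j + 1) = Lf j * (RatFunc.X - RatFunc.X ^ q ^ (j + 1)) /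
      ((RatFunc.X - RatFunc.C (ζ ^ q ^ (j + 2))) *
        (RatFunc.X - RatFunc.C ζ) ^ (q ^ (j + 1) - q ^ j) *
        (RatFunc.X - RatFunc.C ζ ^ q) ^ q ^ j))
    (g : PowerSeries (RatFunc F))
    (hg1 : ∀ j : ℕ, PowerSeries.coeff (R := RatFunc F) (q ^ j) g = (-1 : RatFunc F) ^ j * (Lf j)⁻¹)
    (hg2 : ∀ n : ℕ, (∀ j : ℕ, q ^ j ≠ n) → PowerSeries.coeff (R := RatFunc F) n g = 0) :
    let t : RatFunc F := RatFunc.X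
    let z : RatFunc F := RatFunc.C ζ
    let x : RatFunc F := ((t - z) * (t - z ^ q))⁻¹
    let y : RatFunc F := t * x
    let Ψx : Polynomial (RatFunc F) :=
      Polynomial.C ((t - z ^ q) / (t - z)) * Polynomial.X ^ q ^ 2 +
        Polynomial.C ((t - z)⁻¹ + ((t - z ^ q) ^ (q - 1) * (t - z))⁻¹) * Polynomial.X ^ q +
        Polynomial.C x * Polynomial.X
    let Ψy : Polynomial (RatFunc F) :=
      Polynomial.C (z * ((t - z ^ q) / (t - z))) * Polynomial.X ^ q ^ 2 +
        Polynomial.C (t * (t - z)⁻¹ + z * ((t - z ^ q) ^ (q - 1) * (t - z))⁻¹) *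
          Polynomial.X ^ q +
        Polynomial.C y * Polynomial.X
    (∀ n : ℕ, ∑ j ∈ Finset.range (n + 1),
        (-1 : RatFunc F) ^ j * (Lf j)⁻¹ * (Ψx ^ q ^ j).coeff n =
        x * PowerSeries.coeff (R := RatFunc F) n g) ∧
      (∀ n : ℕ, ∑ j ∈ Finset.range (n + 1),
        (-1 : RatFunc F) ^ j * (Lf j)⁻¹ * (Ψy ^ q ^ j).coeff n =
        y * PowerSeries.coeff (R := RatFunc F) n g) :=
  stmt9_general q hq ζ Lf hL0 hL g hg1 hg2
end
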